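/- arXiv:1311.7357 — 2 statements merged into one kernel-verified Lean document; each statement's English description precedes it below -/
import Mathlib

section
/- For every ε > 0 and every M, there exist a list with an initial order and a request sequence σ such that, under the full cost model, OPT(σ) ≥ M and min(MTFO(σ), MTFE(σ)) ≥ (1.75 − ε)·OPT(σ). Consequently, the algorithm that serves each input by the cheaper of MTFO and MTFE has competitive ratio at least 1.75 under the full cost model. -/
namespace ListUpdate

variable {α : Type} [DecidableEq α]

/-- Swap the adjacent items at (0-based) positions `i` and `i+1`. -/
def adjSwap (L : List α) (i : ℕ) : List α :=
  L.take i ++ (match L.drop i with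
    | a :: b :: t => b :: a :: t
    | t => t)

/-- An offline action for one request: a sequence of paid exchanges performed
before the access (each given by the position of the swapped pair), and the
target position for the free exchange performed after the access. -/
structure Action (α : Type) where
  paid : List ℕ
  target : ℕ

def doPaid (L : List α) (ps : List ℕ) : List α := ps.foldl adjSwap L

/-- Move item `r` (for free) to position `min j (current position)`,
i.e. to any position not farther from the front. -/
def freeMove (L : List α) (r : α) (j : ℕ) : List α :=
  (L.erase r).insertIdx (min j (L.idxOf r)) r

/-- Cost of one offline step: one unit per paid exchange plus the access cost;
`c = 1` gives the full cost model, `c = 0` the partial cost model. -/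
def stepCost (c : ℕ) (L : List α) (r : α) (a : Action α) : ℕ :=
  a.paid.length + ((doPaid L a.paid).idxOf r + c)

def stepList (L : List α) (r : α) (a : Action α) : List α :=
  freeMove (doPaid L a.paid) r a.target

/-- Total cost of serving the request sequence with the given actions. -/
def serveCost (c : ℕ) : List α → List α → List (Action α) → ℕ
  | _, [], _ => 0
  | _, _ :: _, [] => 0
  | L, r :: σ, a :: as => stepCost c L r a + serveCost c (stepList L r a) σ as

/-- The list configuration after serving the requests with the given actions. -/
def serveList : List α → List α → List (Action α) → List α
  | L, [], _ => L
  | L, _ :: _, [] => L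
  | L, r :: σ, a :: as => serveList (stepList L r a) σ as

/-- `optCost c L σ` : the optimal offline cost of serving `σ` starting from list `L`. -/
noncomputable def optCost (c : ℕ) (L : List α) (σ : List α) : ℕ :=
  sInf { n | ∃ as : List (Action α), as.length = σ.length ∧ serveCost c L σ as = n }

/-- Cost of an MTF2 (move-to-front-every-other-access) algorithm: it keeps one bit
per item; on each request the requested item's bit is flipped and the item is moved
to the front exactly when the bit becomes `false` (i.e. 0). -/
def mtf2Cost (c : ℕ) : (α → Bool) → List α → List α → ℕ
  | _, _, [] => 0
  | bits, L, r :: σ =>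
    (L.idxOf r + c) +
      mtf2Cost c (Function.update bits r (!bits r))
        (if !bits r then L else r :: L.erase r) σ

/-- Final list of an MTF2 algorithm. -/
def mtf2List : (α → Bool) → List α → List α → List α
  | _, L, [] => L
  | bits, L, r :: σ =>
      mtf2List (Function.update bits r (!bits r))
        (if !bits r then L else r :: L.erase r) σ

/-- MTFO moves the requested item to the front on every odd request to it:
this is MTF2 with all bits initially 1. -/
def mtfoCost (c : ℕ) (L σ : List α) : ℕ := mtf2Cost c (fun _ => true) L σ

/-- MTFE moves the requested item to the front on every even request to it:
this is MTF2 with all bits initially 0. -/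
def mtfeCost (c : ℕ) (L σ : List α) : ℕ := mtf2Cost c (fun _ => false) L σ

/-- One step of TS (Timestamp). `h` is the list of previous requests, most recent
first. The requested item `x` is inserted in front of the first item of the list
that precedes `x` and was requested at most once since the last request to `x`;
if there is no such item, or this is the first request to `x`, nothing moves. -/
def tsStep (h : List α) (L : List α) (x : α) : List α :=
  if x ∈ h then
    let cnt : α → ℕ := fun z => (h.takeWhile (fun w => decide (w ≠ x))).count z
    let pre := L.takeWhile (fun w => decide (w ≠ x))
    let keep := pre.takeWhile (fun z => decide (2 ≤ cnt z))
    keep ++ x :: (pre.drop keep.length ++ (L.dropWhile (fun w => decide (w ≠ x))).tail)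
  else L

/-- Cost of TS; `h` is the history of previous requests, most recent first
(initially `[]`). -/
def tsCost (c : ℕ) : List α → List α → List α → ℕ
  | _, _, [] => 0
  | h, L, r :: σ => (L.idxOf r + c) + tsCost c (r :: h) (tsStep h L r) σ

/-- An online algorithm with advice: its action may depend on the advice tape and
on the sequence of requests seen so far (ending with the current request). -/
def OnlineAdviceAlg (α : Type) := (ℕ → Bool) → List α → Action α

/-- Total cost of running the online algorithm `A` with advice tape `φ`:
`past` is the reversed-free list of requests served so far (oldest first). -/
def runAdvCost (c : ℕ) (A : OnlineAdviceAlg α) (φ : ℕ → Bool) :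
    List α → List α → List α → ℕ
  | _, _, [] => 0
  | past, L, r :: σ =>
      stepCost c L r (A φ (past ++ [r])) +
        runAdvCost c A φ (past ++ [r]) (stepList L r (A φ (past ++ [r]))) σ

/-- `A`, run on `σ` with tape `φ`, reads at most the first `k` bits of advice:
its behaviour on every step of `σ` is unchanged if the tape is modified
beyond position `k`. -/
def UsesAdvice (A : OnlineAdviceAlg α) (φ : ℕ → Bool) (σ : List α) (k : ℕ) : Prop :=
  ∀ ψ : ℕ → Bool, (∀ i < k, ψ i = φ i) →
    ∀ t, 0 < t → t ≤ σ.length → A ψ (σ.take t) = A φ (σ.take t)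

end ListUpdate

/-!
In a half round `L ++ stutter L` (a pass over the list, then a pass requesting every item
twice in a row), an MTF2 algorithm whose bits are all set reverses the list during the first
pass and then pays for both requests of every item at the back of the list, about `5 l² / 2`
in all; with all bits clear it leaves the list alone in the first pass and moves each item on
its first request in the second, about `l²`. Either way every bit is flipped, so over the round
`halfRound L ++ halfRound L.reverse` both MTFO and MTFE pay about `7 l² / 2`, whereas serving
each half round like MTFE with fresh bits costs about `l²`, so `OPT` is at most about `2 l²`
per round. The ratio tends to `7 / 4` as `l` grows, and repeating the round makes `OPT` as
large as wanted.
-/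

namespace ListUpdate

section RequestSequences

variable {β : Type}

def stutter : List β → List β
  | [] => []
  | x :: S => x :: x :: stutter S

@[simp]
lemma length_stutter (S : List β) : (stutter S).length = 2 * S.length := by
  induction S with
  | nil => rfl
  | cons x S ih => simp [stutter, ih]; ring

@[simp]
lemma mem_stutter {x : β} {S : List β} : x ∈ stutter S ↔ x ∈ S := by
  induction S with
  | nil => rfl
  | cons y S ih => simp [stutter, ih]

def halfRound (L : List β) : List β := L ++ stutter L

def fullRound (L : List β) : List β := halfRound L ++ halfRound L.reverse

def rounds (k : ℕ) (L : List β) : List β := (List.replicate k (fullRound L)).flatten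

@[simp]
lemma mem_halfRound {x : β} {L : List β} : x ∈ halfRound L ↔ x ∈ L := by
  simp [halfRound]

lemma mem_of_mem_rounds {x : β} {k : ℕ} {L : List β} (h : x ∈ rounds k L) : x ∈ L := by
  simp only [rounds, List.mem_flatten, List.mem_replicate] at h
  obtain ⟨_, ⟨-, rfl⟩, hx⟩ := h
  simpa [fullRound] using hx

lemma length_rounds (k : ℕ) (L : List β) : (rounds k L).length = k * (6 * L.length) := by
  simp only [rounds, fullRound, halfRound, List.length_flatten, List.map_replicate,
    List.sum_replicate_nat, List.length_append, length_stutter, List.length_reverse]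
  ring

end RequestSequences

variable {α : Type} [DecidableEq α]

lemma idxOf_append_cons {x : α} {P : List α} (S : List α) (hx : x ∉ P) :
    (P ++ x :: S).idxOf x = P.length := by
  rw [List.idxOf_append_of_notMem hx, List.idxOf_cons_self, add_zero]

lemma erase_append_cons {x : α} {P : List α} (S : List α) (hx : x ∉ P) :
    (P ++ x :: S).erase x = P ++ S := by
  rw [List.erase_append_right _ hx, List.erase_cons_head]

lemma freeMove_zero (L : List α) (r : α) : freeMove L r 0 = r :: L.erase r := by
  simp [freeMove]

lemma freeMove_idxOf {L : List α} {r : α} (hr : r ∈ L) : freeMove L r (L.idxOf r) = L := by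
  have hlt := List.idxOf_lt_length_of_mem hr
  rw [freeMove, min_self, List.erase_eq_eraseIdx_of_idxOf rfl]
  simpa only [List.getElem_idxOf hlt] using List.insertIdx_eraseIdx_getElem hlt

section Offline

def Serves (c : ℕ) (L σ : List α) (n : ℕ) (L' : List α) : Prop :=
  ∃ as : List (Action α), as.length = σ.length ∧ serveCost c L σ as = n ∧ serveList L σ as = L'

variable {c n : ℕ} {L L' σ : List α}

lemma serves_nil_iff : Serves c L [] n L' ↔ n = 0 ∧ L' = L := by
  constructor
  · rintro ⟨as, -, rfl, rfl⟩
    exact ⟨rfl, rfl⟩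
  · rintro ⟨rfl, rfl⟩
    exact ⟨[], rfl, rfl, rfl⟩

lemma serves_cons_iff {r : α} :
    Serves c L (r :: σ) n L' ↔
      ∃ a m, Serves c (stepList L r a) σ m L' ∧ n = stepCost c L r a + m := by
  constructor
  · rintro ⟨_ | ⟨a, as⟩, hlen, rfl, rfl⟩
    · simp at hlen
    · exact ⟨a, _, ⟨as, by simpa using hlen, rfl, rfl⟩, rfl⟩
  · rintro ⟨a, m, ⟨as, hlen, rfl, rfl⟩, rfl⟩
    exact ⟨a :: as, by simp [hlen], rfl, rfl⟩

lemma Serves.append {σ₁ σ₂ : List α} {L₁ L₂ : List α} {n₁ n₂ : ℕ}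
    (h₁ : Serves c L σ₁ n₁ L₁) (h₂ : Serves c L₁ σ₂ n₂ L₂) :
    Serves c L (σ₁ ++ σ₂) (n₁ + n₂) L₂ := by
  induction σ₁ generalizing L n₁ with
  | nil =>
    obtain ⟨rfl, rfl⟩ := serves_nil_iff.1 h₁
    simpa using h₂
  | cons r σ₁ ih =>
    obtain ⟨a, m, h, rfl⟩ := serves_cons_iff.1 h₁
    exact serves_cons_iff.2 ⟨a, m + n₂, ih h, by ring⟩

lemma Serves.flatten_replicate (h : Serves c L σ n L) (k : ℕ) :
    Serves c L (List.replicate k σ).flatten (k * n) L := by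
  induction k with
  | zero => exact serves_nil_iff.2 ⟨by simp, rfl⟩
  | succ k ih => simpa [List.replicate_succ, add_mul, add_comm] using h.append ih

lemma Serves.mul_length_le (h : Serves c L σ n L') : c * σ.length ≤ n := by
  induction σ generalizing L n with
  | nil => simp
  | cons r σ ih =>
    obtain ⟨a, m, hm, rfl⟩ := serves_cons_iff.1 h
    simp only [List.length_cons, stepCost]
    nlinarith [ih hm]

lemma optCost_le_of_serves (h : Serves c L σ n L') : optCost c L σ ≤ n := by
  obtain ⟨as, hlen, rfl, -⟩ := h
  exact Nat.sInf_le ⟨as, hlen, rfl⟩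

lemma mul_length_le_optCost (c : ℕ) (L σ : List α) : c * σ.length ≤ optCost c L σ := by
  refine le_csInf ⟨_, List.replicate σ.length ⟨[], 0⟩, List.length_replicate, rfl⟩ ?_
  rintro n ⟨as, hlen, rfl⟩
  exact Serves.mul_length_le ⟨as, hlen, rfl, rfl⟩

/-- An MTF2 algorithm is an offline strategy: "stay" is the free move to the current position. -/
lemma serves_mtf2 (c : ℕ) (bits : α → Bool) (hσ : ∀ r ∈ σ, r ∈ L) :
    Serves c L σ (mtf2Cost c bits L σ) (mtf2List bits L σ) := by
  induction σ generalizing bits L with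
  | nil => exact serves_nil_iff.2 ⟨rfl, rfl⟩
  | cons r σ ih =>
    have hr : r ∈ L := hσ r List.mem_cons_self
    let a : Action α := ⟨[], if !bits r then L.idxOf r else 0⟩
    have hstep : stepList L r a = if !bits r then L else r :: L.erase r := by
      cases hb : bits r <;> simp [a, hb, stepList, doPaid, freeMove_zero, freeMove_idxOf hr]
    have hmem : ∀ x ∈ σ, x ∈ stepList L r a := by
      intro x hx
      have hxL := hσ x (List.mem_cons_of_mem r hx)
      rw [hstep]
      split
      · exact hxL
      · exact (List.perm_cons_erase hr).subset hxL
    have hcost : mtf2Cost c bits L (r :: σ) =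
        stepCost c L r a + mtf2Cost c (Function.update bits r (!bits r)) (stepList L r a) σ := by
      rw [hstep, mtf2Cost, stepCost, doPaid, List.foldl_nil, List.length_nil, zero_add]
    have hlist : mtf2List bits L (r :: σ) =
        mtf2List (Function.update bits r (!bits r)) (stepList L r a) σ := by
      rw [hstep]; rfl
    rw [hcost, hlist]
    exact serves_cons_iff.2 ⟨a, _, ih _ hmem, rfl⟩

end Offline

section MoveToFrontEveryOther

def mtf2Bits : (α → Bool) → List α → α → Bool
  | bits, [] => bits
  | bits, r :: σ => mtf2Bits (Function.update bits r (!bits r)) σ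

lemma mtf2Cost_append (c : ℕ) (bits : α → Bool) (L σ τ : List α) :
    mtf2Cost c bits L (σ ++ τ) =
      mtf2Cost c bits L σ + mtf2Cost c (mtf2Bits bits σ) (mtf2List bits L σ) τ := by
  induction σ generalizing bits L with
  | nil => simp [mtf2Cost, mtf2List, mtf2Bits]
  | cons r σ ih => simp [mtf2Cost, mtf2List, mtf2Bits, ih, Nat.add_assoc]

lemma mtf2List_append (bits : α → Bool) (L σ τ : List α) :
    mtf2List bits L (σ ++ τ) = mtf2List (mtf2Bits bits σ) (mtf2List bits L σ) τ := by
  induction σ generalizing bits L with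
  | nil => rfl
  | cons r σ ih => simp [mtf2List, mtf2Bits, ih]

lemma mtf2Bits_append (bits : α → Bool) (σ τ : List α) :
    mtf2Bits bits (σ ++ τ) = mtf2Bits (mtf2Bits bits σ) τ := by
  induction σ generalizing bits with
  | nil => rfl
  | cons r σ ih => simp [mtf2Bits, ih]

lemma mtf2Bits_of_notMem {y : α} {σ : List α} (hy : y ∉ σ) (bits : α → Bool) :
    mtf2Bits bits σ y = bits y := by
  induction σ generalizing bits with
  | nil => rfl
  | cons r σ ih =>
    rw [List.mem_cons, not_or] at hy
    rw [mtf2Bits, ih hy.2, Function.update_of_ne hy.1]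

lemma mtf2Bits_of_mem_of_nodup {y : α} {σ : List α} (hσ : σ.Nodup) (hy : y ∈ σ)
    (bits : α → Bool) : mtf2Bits bits σ y = !bits y := by
  induction σ generalizing bits with
  | nil => simp at hy
  | cons r σ ih =>
    rw [List.nodup_cons] at hσ
    rw [mtf2Bits]
    by_cases hyr : y = r
    · subst hyr
      rw [mtf2Bits_of_notMem hσ.1, Function.update_self]
    · rw [ih hσ.2 (List.mem_of_ne_of_mem hyr hy), Function.update_of_ne hyr]

lemma mtf2Bits_stutter (bits : α → Bool) (S : List α) : mtf2Bits bits (stutter S) = bits := by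
  induction S with
  | nil => rfl
  | cons x S ih => simp [stutter, mtf2Bits, ih]

variable {c : ℕ} {bits : α → Bool} {L σ : List α} {r : α}

lemma mtf2Cost_cons_of_true (h : bits r = true) :
    mtf2Cost c bits L (r :: σ) =
      L.idxOf r + c + mtf2Cost c (Function.update bits r false) (r :: L.erase r) σ := by
  simp [mtf2Cost, h]

lemma mtf2Cost_cons_of_false (h : bits r = false) :
    mtf2Cost c bits L (r :: σ) = L.idxOf r + c + mtf2Cost c (Function.update bits r true) L σ := by
  simp [mtf2Cost, h]

lemma mtf2List_cons_of_true (h : bits r = true) :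
    mtf2List bits L (r :: σ) = mtf2List (Function.update bits r false) (r :: L.erase r) σ := by
  simp [mtf2List, h]

lemma mtf2List_cons_of_false (h : bits r = false) :
    mtf2List bits L (r :: σ) = mtf2List (Function.update bits r true) L σ := by
  simp [mtf2List, h]

end MoveToFrontEveryOther

section Passes

variable {bits : α → Bool} {P : List α}

lemma choose_two_succ_succ (n : ℕ) : (n + 2).choose 2 = (n + 1).choose 2 + (n + 1) := by
  simp [Nat.choose_succ_succ', add_comm]

lemma mtf2_pass_of_true (S : List α) (hnd : (P ++ S).Nodup) (hb : ∀ x ∈ S, bits x = true) :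
    mtf2Cost 1 bits (P ++ S) S = S.length * P.length + (S.length + 1).choose 2 ∧
      mtf2List bits (P ++ S) S = S.reverse ++ P := by
  induction S generalizing P bits with
  | nil => simp [mtf2Cost, mtf2List]
  | cons x S ih =>
    have hnd' := List.nodup_middle.1 hnd
    have hx : x ∉ P ++ S := (List.nodup_cons.1 hnd').1
    have hxP : x ∉ P := fun h => hx (List.mem_append_left _ h)
    have hb' : ∀ y ∈ S, Function.update bits x false y = true := fun y hy => by
      rw [Function.update_of_ne (ne_of_mem_of_not_mem (List.mem_append_right P hy) hx)]
      exact hb y (List.mem_cons_of_mem x hy)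
    obtain ⟨hcost, hlist⟩ := ih (P := x :: P) hnd' hb'
    simp only [List.cons_append] at hcost hlist
    have hbx := hb x List.mem_cons_self
    rw [mtf2Cost_cons_of_true hbx, mtf2List_cons_of_true hbx, idxOf_append_cons S hxP,
      erase_append_cons S hxP, hcost, hlist]
    refine ⟨?_, by simp⟩
    simp only [List.length_cons, choose_two_succ_succ]
    ring

lemma mtf2_pass_of_false (S : List α) (hnd : (P ++ S).Nodup) (hb : ∀ x ∈ S, bits x = false) :
    mtf2Cost 1 bits (P ++ S) S = S.length * P.length + (S.length + 1).choose 2 ∧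
      mtf2List bits (P ++ S) S = P ++ S := by
  induction S generalizing P bits with
  | nil => simp [mtf2Cost, mtf2List]
  | cons x S ih =>
    have hx : x ∉ P ++ S := (List.nodup_cons.1 (List.nodup_middle.1 hnd)).1
    have hxP : x ∉ P := fun h => hx (List.mem_append_left _ h)
    have hb' : ∀ y ∈ S, Function.update bits x true y = false := fun y hy => by
      rw [Function.update_of_ne (ne_of_mem_of_not_mem (List.mem_append_right P hy) hx)]
      exact hb y (List.mem_cons_of_mem x hy)
    obtain ⟨hcost, hlist⟩ := ih (P := P ++ [x]) (by simpa using hnd) hb'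
    simp only [List.append_assoc, List.singleton_append] at hcost hlist
    have hbx := hb x List.mem_cons_self
    rw [mtf2Cost_cons_of_false hbx, mtf2List_cons_of_false hbx, idxOf_append_cons S hxP,
      hcost, hlist]
    refine ⟨?_, rfl⟩
    simp only [List.length_cons, List.length_append, List.length_nil, choose_two_succ_succ]
    ring

lemma mtf2_stutter_of_true (S : List α) (hnd : (P ++ S).Nodup) (hb : ∀ x ∈ S, bits x = true) :
    mtf2Cost 1 bits (P ++ S) (stutter S) =
        S.length * P.length + (S.length + 1).choose 2 + S.length ∧
      mtf2List bits (P ++ S) (stutter S) = S.reverse ++ P := by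
  induction S generalizing P with
  | nil => simp [stutter, mtf2Cost, mtf2List]
  | cons x S ih =>
    have hnd' := List.nodup_middle.1 hnd
    have hxP : x ∉ P := fun h => (List.nodup_cons.1 hnd').1 (List.mem_append_left _ h)
    obtain ⟨hcost, hlist⟩ := ih (P := x :: P) hnd' (fun y hy => hb y (List.mem_cons_of_mem x hy))
    simp only [List.cons_append] at hcost hlist
    have hbx := hb x List.mem_cons_self
    have hrestore : Function.update (Function.update bits x false) x true = bits := by
      rw [Function.update_idem, ← hbx, Function.update_eq_self]
    rw [stutter, mtf2Cost_cons_of_true hbx, mtf2List_cons_of_true hbx,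
      mtf2Cost_cons_of_false (Function.update_self x false bits),
      mtf2List_cons_of_false (Function.update_self x false bits), hrestore,
      idxOf_append_cons S hxP, erase_append_cons S hxP, List.idxOf_cons_self, hcost, hlist]
    refine ⟨?_, by simp⟩
    simp only [List.length_cons, choose_two_succ_succ]
    ring

lemma mtf2_stutter_of_false (U : List α) (hnd : (P ++ U.reverse).Nodup)
    (hb : ∀ x ∈ U, bits x = false) :
    mtf2Cost 1 bits (P ++ U.reverse) (stutter U) = 2 * U.length * (P.length + U.length) ∧
      mtf2List bits (P ++ U.reverse) (stutter U) = U.reverse ++ P := by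
  induction U generalizing P with
  | nil => simp [stutter, mtf2Cost, mtf2List]
  | cons x U ih =>
    have hL : P ++ (x :: U).reverse = (P ++ U.reverse) ++ x :: [] := by simp
    rw [hL] at hnd ⊢
    have hnd' : (x :: P ++ U.reverse).Nodup := by simpa using List.nodup_middle.1 hnd
    have hx : x ∉ P ++ U.reverse := by simpa using (List.nodup_cons.1 (List.nodup_middle.1 hnd)).1
    obtain ⟨hcost, hlist⟩ := ih (P := x :: P) hnd' (fun y hy => hb y (List.mem_cons_of_mem x hy))
    simp only [List.cons_append] at hcost hlist
    have hbx := hb x List.mem_cons_self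
    have hrestore : Function.update (Function.update bits x true) x false = bits := by
      rw [Function.update_idem, ← hbx, Function.update_eq_self]
    rw [stutter, mtf2Cost_cons_of_false hbx, mtf2List_cons_of_false hbx,
      mtf2Cost_cons_of_true (Function.update_self x true bits),
      mtf2List_cons_of_true (Function.update_self x true bits), hrestore,
      idxOf_append_cons [] hx, erase_append_cons [] hx, List.append_nil, hcost, hlist]
    refine ⟨?_, by simp⟩
    simp only [List.length_cons, List.length_append, List.length_reverse]
    ring

end Passes

def mtf2RoundCost (l : ℕ) : ℕ := 3 * (l + 1).choose 2 + 2 * l * l + l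

def offlineRoundCost (l : ℕ) : ℕ := 2 * (2 * (l + 1).choose 2 + l)

lemma mtf2Bits_halfRound {L : List α} (hL : L.Nodup) (bits : α → Bool) {x : α} (hx : x ∈ L) :
    mtf2Bits bits (halfRound L) x = !bits x := by
  rw [halfRound, mtf2Bits_append, mtf2Bits_stutter, mtf2Bits_of_mem_of_nodup hL hx]

lemma mtf2Bits_fullRound {L : List α} (hL : L.Nodup) (bits : α → Bool) {x : α} (hx : x ∈ L) :
    mtf2Bits bits (fullRound L) x = bits x := by
  rw [fullRound, mtf2Bits_append, mtf2Bits_halfRound (List.nodup_reverse.2 hL) _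
    (List.mem_reverse.2 hx), mtf2Bits_halfRound hL _ hx, Bool.not_not]

lemma mtf2_halfRound {L : List α} (hL : L.Nodup) {b : Bool} {bits : α → Bool}
    (hb : ∀ x ∈ L, bits x = b) :
    mtf2Cost 1 bits L (halfRound L) = (L.length + 1).choose 2 +
        (if b then 2 * L.length * L.length else (L.length + 1).choose 2 + L.length) ∧
      mtf2List bits L (halfRound L) = L.reverse := by
  have hflip : ∀ x ∈ L, mtf2Bits bits L x = !b := fun x hx => by
    rw [mtf2Bits_of_mem_of_nodup hL hx, hb x hx]
  cases b
  · obtain ⟨hcost, hlist⟩ := mtf2_pass_of_false (P := []) L hL hb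
    obtain ⟨hcost', hlist'⟩ := mtf2_stutter_of_true (P := []) L hL hflip
    simp only [List.nil_append, List.append_nil, List.length_nil, mul_zero, zero_add]
      at hcost hlist hcost' hlist'
    simp [halfRound, mtf2Cost_append, mtf2List_append, hcost, hlist, hcost', hlist']
  · obtain ⟨hcost, hlist⟩ := mtf2_pass_of_true (P := []) L hL hb
    obtain ⟨hcost', hlist'⟩ := mtf2_stutter_of_false (P := []) L (by simpa using hL) hflip
    simp only [List.nil_append, List.append_nil, List.length_nil, mul_zero, zero_add]
      at hcost hlist hcost' hlist'
    simp [halfRound, mtf2Cost_append, mtf2List_append, hcost, hlist, hcost', hlist']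

lemma mtf2_fullRound {L : List α} (hL : L.Nodup) {b : Bool} {bits : α → Bool}
    (hb : ∀ x ∈ L, bits x = b) :
    mtf2Cost 1 bits L (fullRound L) = mtf2RoundCost L.length ∧
      mtf2List bits L (fullRound L) = L := by
  obtain ⟨hcost, hlist⟩ := mtf2_halfRound hL hb
  have hflip : ∀ x ∈ L.reverse, mtf2Bits bits (halfRound L) x = !b := fun x hx => by
    rw [List.mem_reverse] at hx
    rw [mtf2Bits_halfRound hL _ hx, hb x hx]
  obtain ⟨hcost', hlist'⟩ := mtf2_halfRound (List.nodup_reverse.2 hL) hflip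
  constructor
  · rw [fullRound, mtf2Cost_append, hcost, hlist, hcost', List.length_reverse, mtf2RoundCost]
    cases b <;> simp <;> ring
  · rw [fullRound, mtf2List_append, hlist, hlist', List.reverse_reverse]

lemma mtf2Cost_rounds {L : List α} (hL : L.Nodup) {b : Bool} (k : ℕ) {bits : α → Bool}
    (hb : ∀ x ∈ L, bits x = b) :
    mtf2Cost 1 bits L (rounds k L) = k * mtf2RoundCost L.length := by
  induction k generalizing bits with
  | zero => simp [rounds, mtf2Cost]
  | succ k ih =>
    obtain ⟨hcost, hlist⟩ := mtf2_fullRound hL hb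
    rw [rounds, List.replicate_succ, List.flatten_cons, mtf2Cost_append, hcost, hlist,
      ← rounds, ih fun x hx => (mtf2Bits_fullRound hL bits hx).trans (hb x hx)]
    ring

/-- The offline strategy serves every half round like MTFE started afresh. -/
lemma serves_halfRound {L : List α} (hL : L.Nodup) :
    Serves 1 L (halfRound L) (2 * (L.length + 1).choose 2 + L.length) L.reverse := by
  obtain ⟨hcost, hlist⟩ := mtf2_halfRound hL (bits := fun _ => false) (fun _ _ => rfl)
  have h := serves_mtf2 (L := L) 1 (fun _ => false) (fun r hr => mem_halfRound.1 hr)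
  rw [hcost, hlist] at h
  simpa [two_mul, add_assoc] using h

lemma optCost_rounds_le {L : List α} (hL : L.Nodup) (k : ℕ) :
    optCost 1 L (rounds k L) ≤ k * offlineRoundCost L.length := by
  have hround : Serves 1 L (fullRound L) (offlineRoundCost L.length) L := by
    have h := (serves_halfRound hL).append (serves_halfRound (List.nodup_reverse.2 hL))
    rw [List.reverse_reverse, List.length_reverse] at h
    rwa [offlineRoundCost, two_mul (_ + _)]
  exact optCost_le_of_serves (hround.flatten_replicate k)

lemma sub_mul_offlineRoundCost_le {ε : ℝ} {l : ℕ} (hl : 3 ≤ ε * l) :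
    (1.75 - ε) * (offlineRoundCost l : ℝ) ≤ mtf2RoundCost l := by
  have hchoose : (l + 1).choose 2 * 2 = (l + 1) * l := by
    rw [← Nat.add_one_mul_choose_eq, Nat.choose_one_right]
  have hchoose' : ((l + 1).choose 2 : ℝ) = (l + 1) * l / 2 := by
    rw [eq_div_iff two_ne_zero]; exact_mod_cast hchoose
  have hl' : 3 * (l : ℝ) ≤ ε * l * l := by nlinarith [(Nat.cast_nonneg l : (0 : ℝ) ≤ l)]
  simp only [offlineRoundCost, mtf2RoundCost]
  push_cast
  rw [hchoose']
  nlinarith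

theorem exists_instance_optCost_ge_ratio_ge {ε : ℝ} (hε : 0 < ε) (M : ℕ) :
    ∃ (L σ : List ℕ), L.Nodup ∧ (∀ r ∈ σ, r ∈ L) ∧ M ≤ optCost 1 L σ ∧
      (1.75 - ε) * (optCost 1 L σ : ℝ) ≤ (min (mtfoCost 1 L σ) (mtfeCost 1 L σ) : ℝ) := by
  obtain ⟨l, hl⟩ := exists_nat_gt (3 / ε)
  have hεl : 3 ≤ ε * l := by rw [div_lt_iff₀ hε] at hl; linarith
  have hl1 : 1 ≤ l := by
    have : (0 : ℝ) < l := lt_trans (by positivity) hl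
    exact_mod_cast this
  have hL : (List.range l).Nodup := List.nodup_range
  have hmtf (b : Bool) : mtf2Cost 1 (fun _ => b) (List.range l) (rounds M (List.range l)) =
      M * mtf2RoundCost l := by
    simpa using mtf2Cost_rounds hL M (fun _ _ => rfl)
  have hopt := optCost_rounds_le hL M
  rw [List.length_range] at hopt
  have hM : M ≤ optCost 1 (List.range l) (rounds M (List.range l)) :=
    calc M ≤ 1 * (rounds M (List.range l)).length := by
          rw [length_rounds, List.length_range]; nlinarith
      _ ≤ _ := mul_length_le_optCost 1 _ _
  refine ⟨List.range l, rounds M (List.range l), hL, fun r => mem_of_mem_rounds, hM, ?_⟩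
  rw [mtfoCost, mtfeCost, hmtf, hmtf, min_self]
  rcases le_or_gt (1.75 : ℝ) ε with hε' | hε'
  · exact le_trans (mul_nonpos_of_nonpos_of_nonneg (by linarith) (Nat.cast_nonneg _))
      (Nat.cast_nonneg _)
  · calc (1.75 - ε) * (optCost 1 (List.range l) (rounds M (List.range l)) : ℝ)
        ≤ (1.75 - ε) * (M * offlineRoundCost l : ℕ) := by gcongr
      _ = M * ((1.75 - ε) * offlineRoundCost l) := by push_cast; ring
      _ ≤ (M * mtf2RoundCost l : ℕ) := by
          push_cast; gcongr; exact sub_mul_offlineRoundCost_le hεl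

end ListUpdate

open ListUpdate

/-- For every `ε > 0` and every `M` there are an initial list and a request sequence
`σ` with `OPT(σ) ≥ M` and `min(MTFO(σ), MTFE(σ)) ≥ (1.75 − ε)·OPT(σ)` (full cost
model); consequently, the algorithm serving each input by the cheaper of MTFO and
MTFE has competitive ratio at least `1.75`. -/
theorem best_of_two_lower_bound :
    (∀ ε : ℝ, 0 < ε → ∀ M : ℕ, ∃ (L σ : List ℕ), L.Nodup ∧ (∀ r ∈ σ, r ∈ L) ∧
      M ≤ optCost 1 L σ ∧
      (1.75 - ε) * (optCost 1 L σ : ℝ) ≤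
        (min (mtfoCost 1 L σ) (mtfeCost 1 L σ) : ℝ)) ∧
    (∀ c : ℝ, c < 1.75 → ∀ b : ℝ, ∃ (L σ : List ℕ), L.Nodup ∧ (∀ r ∈ σ, r ∈ L) ∧
      ¬((min (mtfoCost 1 L σ) (mtfeCost 1 L σ) : ℝ) ≤
          c * (optCost 1 L σ : ℝ) + b)) := by
  refine ⟨fun ε hε M => exists_instance_optCost_ge_ratio_ge hε M, fun c hc b => ?_⟩
  -- `1.75 - ε = c + ε`, so the excess over `c · OPT` is at least `ε · OPT ≥ ε M > b`
  set ε := (1.75 - c) / 2 with hε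
  obtain ⟨M, hM⟩ := exists_nat_gt (b / ε)
  obtain ⟨L, σ, hL, hσ, hOPT, hratio⟩ :=
    exists_instance_optCost_ge_ratio_ge (by linarith : 0 < ε) M
  refine ⟨L, σ, hL, hσ, not_le.2 ?_⟩
  have hb : b < ε * optCost 1 L σ :=
    calc b < ε * M := by rwa [div_lt_iff₀' (by linarith)] at hM
      _ ≤ ε * optCost 1 L σ := by gcongr
  have hsplit : (1.75 - ε) * (optCost 1 L σ : ℝ) = c * optCost 1 L σ + ε * optCost 1 L σ := by
    rw [hε]; ring
  linarith
end

section
/- On a list of two items, under the partial cost model, there is a constant c such that for every initial list order, every initial bit assignment, and every request sequence σ, the MTF2 algorithm A satisfies A(σ) ≤ 2.5·OPT(σ) + c. -/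
/-!
The proof is an amortized analysis. On two items MTF2's list either agrees with OPT's list or is
its reverse, so a potential depending only on the two lists and MTF2's bits takes finitely many
values. With a suitable choice of these values, every request satisfies
`2 · MTF2 + ΔΦ ≤ 5 · OPT`; summing gives `2 · MTF2(σ) ≤ 5 · OPT(σ) + Φ₀`, and `Φ₀ ≤ 1` because
both algorithms start from the same list.
-/

namespace ListUpdate

open List

variable {α : Type}

theorem adjSwap_perm (L : List α) (i : ℕ) : adjSwap L i ~ L := by
  unfold adjSwap
  conv_rhs => rw [← take_append_drop i L]
  refine Perm.append_left _ ?_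
  split
  · next h => rw [h]; exact Perm.swap _ _ _
  · rfl

theorem doPaid_perm (L : List α) (ps : List ℕ) : doPaid L ps ~ L := by
  induction ps generalizing L with
  | nil => rfl
  | cons p ps ih => exact (ih (adjSwap L p)).trans (adjSwap_perm L p)

variable [DecidableEq α] {r s : α}

theorem freeMove_perm {L : List α} (hr : r ∈ L) (j : ℕ) : freeMove L r j ~ L := by
  have hidx : L.idxOf r ≤ (L.erase r).length := by
    rw [length_erase_of_mem hr]
    have := idxOf_lt_length_iff.mpr hr
    omega
  exact (perm_insertIdx r _ ((min_le_right _ _).trans hidx)).trans (perm_cons_erase hr).symm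

theorem stepList_perm {L : List α} (hr : r ∈ L) (a : Action α) : stepList L r a ~ L :=
  (freeMove_perm ((doPaid_perm L a.paid).mem_iff.mpr hr) a.target).trans (doPaid_perm L a.paid)

def mtf2Move (b : Bool) (L : List α) (r : α) : List α := if !b then L else r :: L.erase r

theorem mtf2Cost_cons (c : ℕ) (bits : α → Bool) (L : List α) (r : α) (σ : List α) :
    mtf2Cost c bits L (r :: σ) =
      L.idxOf r + c + mtf2Cost c (Function.update bits r (!bits r)) (mtf2Move (bits r) L r) σ :=
  rfl

theorem mtf2Move_perm (b : Bool) {L : List α} (hr : r ∈ L) : mtf2Move b L r ~ L := by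
  unfold mtf2Move
  split
  · rfl
  · exact (perm_cons_erase hr).symm

theorem one_le_stepCost_of_rear (c : ℕ) (hrs : r ≠ s) (a : Action α) :
    1 ≤ stepCost c [s, r] r a := by
  unfold stepCost
  rcases hp : a.paid with _ | _
  · simp [doPaid, idxOf_cons_ne _ hrs.symm]
  · simp only [length_cons]
    omega

/-- Free exchanges only move `r` forward, so OPT can turn `[r, s]` into `[s, r]` on a request
to `r` only by a paid exchange followed by an access to the rear. -/
theorem two_le_stepCost_of_reverse (c : ℕ) (hrs : r ≠ s) (a : Action α)
    (h : stepList [r, s] r a = [s, r]) : 2 ≤ stepCost c [r, s] r a := by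
  unfold stepList at h
  unfold stepCost
  rcases perm_pair.mp (doPaid_perm [r, s] a.paid) with hpaid | hpaid
  · simp [hpaid, freeMove, hrs] at h
  · have hne : a.paid ≠ [] := by
      rintro hnil
      simp [hnil, doPaid, hrs] at hpaid
    have := length_pos_iff.mpr hne
    rw [hpaid, idxOf_cons_ne _ hrs.symm, idxOf_cons_self]
    omega

/-- Here `a, b` are the front and rear items of MTF2's list `LA`; `bits b = false` means that `b`
is still two requests away from moving to the front. -/
def mtf2Potential (bits : α → Bool) (LA LO : List α) : ℕ :=
  match LA with
  | [a, b] => if LA = LO then (bits b).toNat else 2 + 2 * (!bits b).toNat + (bits a).toNat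
  | _ => 0

theorem mtf2Potential_self_le_one (bits : α → Bool) (L : List α) : mtf2Potential bits L L ≤ 1 := by
  unfold mtf2Potential
  split
  · simpa using Bool.toNat_le _
  · exact Nat.zero_le 1

theorem amortized_step (hrs : r ≠ s) (bits : α → Bool) {LA LO : List α} (hLA : LA ~ [r, s])
    (hLO : LO ~ [r, s]) (a : Action α) :
    2 * LA.idxOf r + mtf2Potential (Function.update bits r (!bits r)) (mtf2Move (bits r) LA r)
        (stepList LO r a) ≤ 5 * stepCost 0 LO r a + mtf2Potential bits LA LO := by
  have hLO' := perm_pair.mp ((stepList_perm (hLO.mem_iff.mpr (mem_cons_self ..)) a).trans hLO)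
  rcases perm_pair.mp hLO with rfl | rfl <;> rcases hLO' with h | h <;> rw [h] <;>
    [skip;
     have hc := two_le_stepCost_of_reverse 0 hrs a h;
     have hc := one_le_stepCost_of_rear 0 hrs a;
     have hc := one_le_stepCost_of_rear 0 hrs a] <;>
    rcases perm_pair.mp hLA with rfl | rfl <;> cases hbr : bits r <;> cases hbs : bits s <;>
    simp [mtf2Potential, mtf2Move, hbr, hbs, hrs, hrs.symm] <;> omega

theorem two_mul_mtf2Cost_le {x y : α} (hxy : x ≠ y) {σ : List α} (hσ : ∀ r ∈ σ, r = x ∨ r = y)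
    (bits : α → Bool) {LA LO : List α} (hLA : LA ~ [x, y]) (hLO : LO ~ [x, y])
    {as : List (Action α)} (hlen : as.length = σ.length) :
    2 * mtf2Cost 0 bits LA σ ≤ 5 * serveCost 0 LO σ as + mtf2Potential bits LA LO := by
  induction σ generalizing bits LA LO as with
  | nil => simp [mtf2Cost]
  | cons r σ ih =>
    obtain _ | ⟨a, as⟩ := as
    · simp at hlen
    have hrx : r ∈ [x, y] := by rcases hσ r mem_cons_self with rfl | rfl <;> simp
    have hstep : 2 * LA.idxOf r + mtf2Potential (Function.update bits r (!bits r))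
        (mtf2Move (bits r) LA r) (stepList LO r a) ≤
          5 * stepCost 0 LO r a + mtf2Potential bits LA LO := by
      rcases hσ r mem_cons_self with rfl | rfl
      · exact amortized_step hxy bits hLA hLO a
      · exact amortized_step hxy.symm bits (hLA.trans (Perm.swap _ _ _))
          (hLO.trans (Perm.swap _ _ _)) a
    have hrest := ih (fun t ht => hσ t (mem_cons_of_mem r ht)) (Function.update bits r (!bits r))
      ((mtf2Move_perm (bits r) (hLA.mem_iff.mpr hrx)).trans hLA)
      ((stepList_perm (hLO.mem_iff.mpr hrx) a).trans hLO) (Nat.succ_injective hlen)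
    rw [mtf2Cost_cons, serveCost]
    omega

theorem exists_serveCost_eq_optCost (c : ℕ) (L σ : List α) :
    ∃ as : List (Action α), as.length = σ.length ∧ serveCost c L σ as = optCost c L σ :=
  Nat.sInf_mem (s := {n | ∃ as : List (Action α), as.length = σ.length ∧ serveCost c L σ as = n})
    ⟨_, replicate σ.length ⟨[], 0⟩, length_replicate, rfl⟩

end ListUpdate

open ListUpdate

/-- On a list of two items, under the partial cost model, there is a constant `c`
such that for every initial list order, every initial bit assignment and every
request sequence `σ`, the MTF2 algorithm satisfies `MTF2(σ) ≤ 2.5·OPT(σ) + c`. -/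
theorem mtf2_upper_bound_two_items :
    ∃ c : ℝ, ∀ (α : Type) (_ : DecidableEq α) (x y : α), x ≠ y →
      ∀ L : List α, (L = [x, y] ∨ L = [y, x]) →
        ∀ (bits : α → Bool) (σ : List α), (∀ r ∈ σ, r = x ∨ r = y) →
          (mtf2Cost 0 bits L σ : ℝ) ≤ 2.5 * (optCost 0 L σ : ℝ) + c := by
  refine ⟨1 / 2, fun α _ x y hxy L hL bits σ hσ => ?_⟩
  obtain ⟨as, hlen, hopt⟩ := exists_serveCost_eq_optCost 0 L σ
  have hperm : L.Perm [x, y] := List.perm_pair.mpr hL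
  have hamort := two_mul_mtf2Cost_le hxy hσ bits hperm hperm hlen
  have hinit := mtf2Potential_self_le_one bits L
  have hnat : 2 * mtf2Cost 0 bits L σ ≤ 5 * optCost 0 L σ + 1 := by omega
  have hreal : (2 * mtf2Cost 0 bits L σ : ℝ) ≤ 5 * optCost 0 L σ + 1 := by exact_mod_cast hnat
  linarith
end
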